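/- arXiv:1308.3431 — 2 statements merged into one kernel-verified Lean document; each statement's English description precedes it below -/
import Mathlib

section
/- Let μ be a uniformly locally bounded local measure on ℝ, i.e. ‖μ‖_unif := sup_{t∈ℝ} |μ|((t, t+1]) < ∞. Then for every γ > 0 there exists C_γ > 0 such that for all u ∈ W^1_2(ℝ): |∫_ℝ |u(t)|² dμ(t)| ≤ γ ‖μ‖_unif ∫ |u'|² + C_γ ‖μ‖_unif ‖u‖_2². In particular, μ is an infinitesimally form-small perturbation of the Dirichlet form ∫ u'v̄'. -/
/-!
On a window `I` of length `ℓ`, the fundamental theorem of calculus and Cauchy–Schwarz bound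
`u(x)²` at every point of `I` by `(2/ℓ) ∫_I u² + 2ℓ ∫_I u'²`. For `ℓ ≤ 1` each window in the
tiling of `ℝ` by translates of `(0, ℓ]` has `|μ|`-mass at most `‖μ‖_unif`, so summing over the
tiling gives `|∫ u² dμ| ≤ ‖μ‖_unif ((2/ℓ) ‖u‖₂² + 2ℓ ‖u'‖₂²)`; take `ℓ = min (γ/2) 1`.
-/

open MeasureTheory Filter Topology Set

/-- A (signed) local measure on `ℝ`, given by its Jordan decomposition:
two mutually singular nonnegative Borel measures. -/
structure LocalMeasure where
  pos : Measure ℝ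
  neg : Measure ℝ
  mutuallySingular : pos ⟂ₘ neg

namespace LocalMeasure

/-- The total variation `|μ|`. -/
noncomputable def tv (μ : LocalMeasure) : Measure ℝ := μ.pos + μ.neg

/-- Integration against the signed local measure. -/
noncomputable def integral (μ : LocalMeasure) (f : ℝ → ℝ) : ℝ :=
  (∫ x, f x ∂μ.pos) - ∫ x, f x ∂μ.neg

/-- Integration of a complex-valued function against the signed local measure. -/
noncomputable def cintegral (μ : LocalMeasure) (f : ℝ → ℂ) : ℂ :=
  (∫ x, f x ∂μ.pos) - ∫ x, f x ∂μ.neg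

/-- `‖μ‖_unif = sup_t |μ|((t,t+1])`. -/
noncomputable def munif (μ : LocalMeasure) : ENNReal := ⨆ t : ℝ, μ.tv (Set.Ioc t (t + 1))

/-- `μ` is uniformly locally bounded by `C`. -/
def UnifBounded (μ : LocalMeasure) (C : ℝ) : Prop :=
  ∀ t : ℝ, μ.tv (Set.Ioc t (t + 1)) ≤ ENNReal.ofReal C

/-- The translate `ω(· + t)`, i.e. `B ↦ ω(B + t)`. -/
noncomputable def translate (μ : LocalMeasure) (t : ℝ) : LocalMeasure where
  pos := Measure.map (fun x => x - t) μ.pos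
  neg := Measure.map (fun x => x - t) μ.neg
  mutuallySingular := by
    obtain ⟨s, hs, h1, h2⟩ := μ.mutuallySingular
    refine ⟨(fun y => y + t) ⁻¹' s, hs.preimage (measurable_add_const t), ?_, ?_⟩
    · rw [Measure.map_apply (measurable_sub_const t) (hs.preimage (measurable_add_const t))]
      convert h1 using 2
      ext x; simp
    · rw [← Set.preimage_compl,
        Measure.map_apply (measurable_sub_const t) (hs.compl.preimage (measurable_add_const t))]
      convert h2 using 2
      ext x; simp

/-- The real value `μ(B)` of the signed local measure on a Borel set `B`. -/
noncomputable def val (μ : LocalMeasure) (B : Set ℝ) : ℝ :=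
  (μ.pos B).toReal - (μ.neg B).toReal

/-- Vague convergence of a sequence of local measures. -/
def VagueTendsto (g : ℕ → LocalMeasure) (μ : LocalMeasure) : Prop :=
  ∀ f : ℝ → ℝ, Continuous f → HasCompactSupport f →
    Tendsto (fun n => (g n).integral f) atTop (𝓝 (μ.integral f))

/-- The vague topology `σ(C_c(ℝ)', C_c(ℝ))` on local measures. -/
noncomputable def vagueTopology : TopologicalSpace LocalMeasure :=
  TopologicalSpace.induced
    (fun μ => fun f : {f : ℝ → ℝ // Continuous f ∧ HasCompactSupport f} => μ.integral f.1)
    inferInstance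

end LocalMeasure

/-- Membership in the Sobolev space `W^1_2(ℝ)` (continuous representative `u`
with weak derivative `u'`). -/
def MemW12 (u u' : ℝ → ℝ) : Prop :=
  MemLp u 2 (volume : Measure ℝ) ∧ MemLp u' 2 (volume : Measure ℝ) ∧
    ∀ x y : ℝ, u y - u x = ∫ t in x..y, u' t

theorem sq_integral_le_measureReal_mul_integral_sq {α : Type*} [MeasurableSpace α]
    {μ : Measure α} [IsFiniteMeasure μ] {f : α → ℝ} (hf : MemLp f 2 μ) :
    (∫ x, f x ∂μ) ^ 2 ≤ μ.real univ * ∫ x, f x ^ 2 ∂μ := by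
  rcases eq_zero_or_neZero μ with rfl | _
  · simp
  have hm : 0 < μ.real univ := measureReal_univ_pos
  have jensen := (Even.convexOn_pow even_two).map_average_le (continuous_pow 2).continuousOn
    isClosed_univ (by simp) (hf.integrable one_le_two) hf.integrable_sq
  rw [average_eq, average_eq, smul_eq_mul, smul_eq_mul, mul_pow, inv_pow,
    ← div_eq_inv_mul, ← div_eq_inv_mul, div_le_div_iff₀ (by positivity) hm] at jensen
  nlinarith

theorem abs_intervalIntegral_le_setIntegral_abs_Ioc {f : ℝ → ℝ} {a b x y : ℝ}
    (hf : IntegrableOn f (Ioc a b)) (hx : x ∈ Icc a b) (hy : y ∈ Icc a b) :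
    |∫ t in x..y, f t| ≤ ∫ t in Ioc a b, |f t| := by
  have hsub : uIoc x y ⊆ Ioc a b := Ioc_subset_Ioc (le_min hx.1 hy.1) (max_le hx.2 hy.2)
  calc |∫ t in x..y, f t| ≤ ∫ t in uIoc x y, |f t| := by
        simpa only [Real.norm_eq_abs] using
          intervalIntegral.norm_integral_le_integral_norm_uIoc (f := f) (μ := volume)
    _ ≤ ∫ t in Ioc a b, |f t| :=
        setIntegral_mono_set hf.abs (.of_forall fun _ => abs_nonneg _) hsub.eventuallyLE

namespace MemW12

variable {u u' : ℝ → ℝ}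

theorem sq_sub_le (h : MemW12 u u') {a b x y : ℝ} (hab : a ≤ b) (hx : x ∈ Icc a b)
    (hy : y ∈ Icc a b) :
    (u y - u x) ^ 2 ≤ (b - a) * ∫ t in Ioc a b, u' t ^ 2 := by
  have : Fact (volume (Ioc a b) < ⊤) := ⟨measure_Ioc_lt_top⟩
  have hu' : MemLp u' 2 (volume.restrict (Ioc a b)) := h.2.1.restrict _
  calc (u y - u x) ^ 2 = |∫ t in x..y, u' t| ^ 2 := by rw [h.2.2, sq_abs]
    _ ≤ (∫ t in Ioc a b, |u' t|) ^ 2 := by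
        gcongr
        exact abs_intervalIntegral_le_setIntegral_abs_Ioc (hu'.integrable one_le_two) hx hy
    _ ≤ (b - a) * ∫ t in Ioc a b, |u' t| ^ 2 := by
        simpa [measureReal_def, hab] using sq_integral_le_measureReal_mul_integral_sq hu'.abs
    _ = (b - a) * ∫ t in Ioc a b, u' t ^ 2 := by simp_rw [sq_abs]

theorem sq_le_setIntegral (h : MemW12 u u') {a ℓ x : ℝ} (hℓ : 0 < ℓ) (hx : x ∈ Ioc a (a + ℓ)) :
    u x ^ 2 ≤ ∫ t in Ioc a (a + ℓ), (2 / ℓ * u t ^ 2 + 2 * ℓ * u' t ^ 2) := by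
  set I := Ioc a (a + ℓ)
  set A := ∫ t in I, u t ^ 2
  set B := ∫ t in I, u' t ^ 2
  have hu2 : IntegrableOn (fun t => u t ^ 2) I := h.1.integrable_sq.integrableOn
  have hu'2 : IntegrableOn (fun t => u' t ^ 2) I := h.2.1.integrable_sq.integrableOn
  have hconst : IntegrableOn (fun _ => 2 * (ℓ * B)) I := integrableOn_const measure_Ioc_lt_top.ne
  have hvol : volume.real I = ℓ := by simp [I, measureReal_def, hℓ.le]
  have hpt : ∀ t ∈ I, u x ^ 2 ≤ 2 * u t ^ 2 + 2 * (ℓ * B) := fun t ht => by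
    have := h.sq_sub_le (by linarith) (Ioc_subset_Icc_self ht) (Ioc_subset_Icc_self hx)
    rw [add_sub_cancel_left] at this
    nlinarith [sq_nonneg (u x - 2 * u t)]
  have havg := setIntegral_ge_of_const_le_real measurableSet_Ioc measure_Ioc_lt_top.ne hpt
    ((hu2.const_mul 2).add hconst)
  rw [integral_add (hu2.const_mul 2) hconst, integral_const_mul, setIntegral_const, smul_eq_mul,
    hvol] at havg
  rw [integral_add (hu2.const_mul _) (hu'2.const_mul _), integral_const_mul, integral_const_mul]
  calc u x ^ 2 = u x ^ 2 * ℓ / ℓ := by field_simp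
    _ ≤ (2 * A + ℓ * (2 * (ℓ * B))) / ℓ := by gcongr
    _ = 2 / ℓ * A + 2 * ℓ * B := by field_simp

end MemW12

theorem lintegral_le_mul_of_le_setLIntegral_Ioc_zsmul {ν : Measure ℝ} {ℓ : ℝ} (hℓ : 0 < ℓ)
    {M : ENNReal} (hν : ∀ n : ℤ, ν (Ioc (n • ℓ) (n • ℓ + ℓ)) ≤ M) {F G : ℝ → ENNReal}
    (hFG : ∀ n : ℤ, ∀ x ∈ Ioc (n • ℓ) (n • ℓ + ℓ), F x ≤ ∫⁻ t in Ioc (n • ℓ) (n • ℓ + ℓ), G t) :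
    ∫⁻ x, F x ∂ν ≤ M * ∫⁻ x, G x := by
  have hunion : ⋃ n : ℤ, Ioc (n • ℓ) (n • ℓ + ℓ) = univ := by
    simpa only [add_one_zsmul] using iUnion_Ioc_zsmul hℓ
  have hdisj : Pairwise (Function.onFun Disjoint fun n : ℤ => Ioc (n • ℓ) (n • ℓ + ℓ)) := by
    simpa only [add_one_zsmul] using pairwise_disjoint_Ioc_zsmul ℓ
  have hsplit (μ : Measure ℝ) (f : ℝ → ENNReal) :
      ∫⁻ x, f x ∂μ = ∑' n : ℤ, ∫⁻ x in Ioc (n • ℓ) (n • ℓ + ℓ), f x ∂μ := by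
    rw [← lintegral_iUnion (fun _ => measurableSet_Ioc) hdisj, hunion, setLIntegral_univ]
  calc ∫⁻ x, F x ∂ν
      = ∑' n : ℤ, ∫⁻ x in Ioc (n • ℓ) (n • ℓ + ℓ), F x ∂ν := hsplit ν F
    _ ≤ ∑' n : ℤ, (∫⁻ t in Ioc (n • ℓ) (n • ℓ + ℓ), G t) * ν (Ioc (n • ℓ) (n • ℓ + ℓ)) := by
        gcongr with n
        exact (setLIntegral_mono' measurableSet_Ioc (hFG n)).trans_eq (setLIntegral_const _ _)
    _ ≤ ∑' n : ℤ, (∫⁻ t in Ioc (n • ℓ) (n • ℓ + ℓ), G t) * M := by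
        gcongr with n
        exact hν n
    _ = M * ∫⁻ x, G x := by rw [ENNReal.tsum_mul_right, ← hsplit, mul_comm]

namespace LocalMeasure

theorem enorm_integral_le_lintegral_enorm (μ : LocalMeasure) (f : ℝ → ℝ) :
    ‖μ.integral f‖ₑ ≤ ∫⁻ x, ‖f x‖ₑ ∂μ.tv := by
  rw [integral, tv, lintegral_add_measure]
  exact (enorm_sub_le).trans
    (add_le_add (MeasureTheory.enorm_integral_le_lintegral_enorm f)
      (MeasureTheory.enorm_integral_le_lintegral_enorm f))

theorem tv_Ioc_le_munif (μ : LocalMeasure) {ℓ : ℝ} (hℓ : ℓ ≤ 1) (t : ℝ) :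
    μ.tv (Ioc t (t + ℓ)) ≤ μ.munif :=
  (measure_mono (Ioc_subset_Ioc_right (by linarith))).trans
    (le_iSup (fun t => μ.tv (Ioc t (t + 1))) t)

end LocalMeasure

/-- A uniformly locally bounded local measure is an infinitesimally form small
perturbation of the Dirichlet form: for every `γ > 0` there is `C_γ > 0` with
`|∫ |u|² dμ| ≤ γ ‖μ‖_unif ∫|u'|² + C_γ ‖μ‖_unif ‖u‖₂²` for all `u ∈ W^1_2(ℝ)`. -/
theorem localMeasure_form_small (μ : LocalMeasure) (hμ : μ.munif ≠ ⊤) :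
    ∀ γ : ℝ, 0 < γ → ∃ C : ℝ, 0 < C ∧
      ∀ (u u' : ℝ → ℝ), MemW12 u u' →
        |μ.integral (fun t => u t ^ 2)| ≤
          γ * (μ.munif).toReal * (∫ x, u' x ^ 2) +
            C * (μ.munif).toReal * ∫ x, u x ^ 2 := by
  intro γ hγ
  set ℓ := min (γ / 2) 1
  have hℓ : 0 < ℓ := lt_min (half_pos hγ) one_pos
  refine ⟨2 / ℓ, by positivity, fun u u' hu => ?_⟩
  set G := fun t => 2 / ℓ * u t ^ 2 + 2 * ℓ * u' t ^ 2
  have hG : Integrable G := (hu.1.integrable_sq.const_mul _).add (hu.2.1.integrable_sq.const_mul _)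
  have hG0 : ∀ t, 0 ≤ G t := fun t => by positivity
  have hbound : ‖μ.integral (fun t => u t ^ 2)‖ₑ ≤ μ.munif * ENNReal.ofReal (∫ x, G x) :=
    calc _ ≤ ∫⁻ x, ‖u x ^ 2‖ₑ ∂μ.tv := μ.enorm_integral_le_lintegral_enorm _
      _ ≤ μ.munif * ∫⁻ x, ENNReal.ofReal (G x) := by
        refine lintegral_le_mul_of_le_setLIntegral_Ioc_zsmul hℓ
          (fun n => μ.tv_Ioc_le_munif (min_le_right _ _) _) fun n x hx => ?_
        rw [← ofReal_integral_eq_lintegral_ofReal hG.integrableOn (.of_forall hG0),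
          Real.enorm_eq_ofReal_abs, abs_sq]
        exact ENNReal.ofReal_le_ofReal (hu.sq_le_setIntegral hℓ hx)
      _ = μ.munif * ENNReal.ofReal (∫ x, G x) := by
        rw [ofReal_integral_eq_lintegral_ofReal hG (.of_forall hG0)]
  have hreal := ENNReal.toReal_mono (ENNReal.mul_ne_top hμ ENNReal.ofReal_ne_top) hbound
  rw [toReal_enorm, Real.norm_eq_abs, ENNReal.toReal_mul,
    ENNReal.toReal_ofReal (integral_nonneg hG0), integral_add
      (hu.1.integrable_sq.const_mul _) (hu.2.1.integrable_sq.const_mul _),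
    integral_const_mul, integral_const_mul] at hreal
  have hℓγ : 2 * ℓ ≤ γ := by linarith [min_le_left (γ / 2) 1]
  calc _ ≤ _ := hreal
    _ = 2 * ℓ * μ.munif.toReal * (∫ x, u' x ^ 2) + 2 / ℓ * μ.munif.toReal * ∫ x, u x ^ 2 := by
        ring
    _ ≤ _ := by gcongr
end

section
/- Let Ω be a set of local measures on ℝ, uniformly bounded in the norm ‖μ‖_unif = sup_t |μ|((t,t+1]), closed in the vague topology, and translation invariant. Then the translation action α: ℝ × Ω → Ω, α_t(ω) = ω(·+t), is jointly continuous: if t_n → t in ℝ and ω_n → ω vaguely in Ω, then α_{t_n}(ω_n) → α_t(ω) vaguely. -/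
open MeasureTheory Filter Topology Set

/-! Since `∫ f d(ω(· + s)) = ∫ f(· - s) dω`, the difference to control splits as
`∫ (f(· - tₙ) - f(· - t)) dωₙ + (∫ f(· - t) dωₙ - ∫ f(· - t) dω)`. The second term tends to `0`
by vague convergence. In the first, the integrands tend to `0` uniformly (`f` is uniformly
continuous) and eventually vanish outside the fixed compact set `tsupport f + [t - 1, t + 1]`,
whose `|ωₙ|`-mass is bounded uniformly in `n` by the uniform bound on `‖ωₙ‖_unif`. -/

open scoped NNReal Pointwise

theorem tendstoUniformly_comp_sub {ι : Type*} {l : Filter ι} {f : ℝ → ℝ}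
    (hf : UniformContinuous f) {s : ι → ℝ} {t : ℝ} (hs : Tendsto s l (𝓝 t)) :
    TendstoUniformly (fun n x => f (x - s n)) (fun x => f (x - t)) l := by
  have hF : TendstoUniformly (fun r x => f (x - r)) (fun x => f (x - t)) (𝓝 t) :=
    UniformContinuous₂.tendstoUniformly
      (hf.comp (uniformContinuous_snd.sub uniformContinuous_fst))
  exact Metric.tendstoUniformly_iff.2 fun ε hε =>
    hs.eventually (Metric.tendstoUniformly_iff.1 hF ε hε)

namespace LocalMeasure

variable {μ : LocalMeasure} {C : ℝ}

theorem tv_Ioc_add_natCast_le (h : μ.UnifBounded C) (a : ℝ) (N : ℕ) :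
    μ.tv (Ioc a (a + N)) ≤ N * ENNReal.ofReal C := by
  induction N with
  | zero => simp
  | succ n ih =>
    have hsplit : Ioc a (a + (n + 1 : ℕ)) = Ioc a (a + n) ∪ Ioc (a + n) (a + n + 1) := by
      rw [Ioc_union_Ioc_eq_Ioc (by simp) (by simp)]
      push_cast; ring_nf
    calc μ.tv (Ioc a (a + (n + 1 : ℕ)))
        ≤ μ.tv (Ioc a (a + n)) + μ.tv (Ioc (a + n) (a + n + 1)) := by
          rw [hsplit]; exact measure_union_le _ _
      _ ≤ n * ENNReal.ofReal C + ENNReal.ofReal C := add_le_add ih (h _)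
      _ = (n + 1 : ℕ) * ENNReal.ofReal C := by push_cast; ring

theorem exists_tv_le_of_isCompact (C : ℝ) {K : Set ℝ} (hK : IsCompact K) :
    ∃ B : ℝ≥0, ∀ μ : LocalMeasure, μ.UnifBounded C → μ.tv K ≤ B := by
  obtain ⟨a, b, hab⟩ := bddBelow_bddAbove_iff_subset_Icc.1 ⟨hK.bddBelow, hK.bddAbove⟩
  set N := ⌈b - a⌉₊ + 1
  have hKN : K ⊆ Ioc (a - 1) (a - 1 + N) := fun x hx =>
    ⟨by linarith [(hab hx).1], by
      have := Nat.le_ceil (b - a); push_cast [N]; linarith [(hab hx).2]⟩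
  exact ⟨N * C.toNNReal, fun μ h => by
    simpa [ENNReal.ofReal] using (measure_mono hKN).trans (tv_Ioc_add_natCast_le h (a - 1) N)⟩

theorem isFiniteMeasureOnCompacts_tv (h : μ.UnifBounded C) : IsFiniteMeasureOnCompacts μ.tv :=
  ⟨fun _ hK => by
    obtain ⟨B, hB⟩ := exists_tv_le_of_isCompact C hK
    exact (hB μ h).trans_lt ENNReal.coe_lt_top⟩

theorem pos_apply_le_tv (s : Set ℝ) : μ.pos s ≤ μ.tv s := by
  rw [tv, Measure.add_apply]; exact le_self_add

theorem neg_apply_le_tv (s : Set ℝ) : μ.neg s ≤ μ.tv s := by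
  rw [tv, Measure.add_apply]; exact le_add_self

theorem isFiniteMeasureOnCompacts_pos (h : μ.UnifBounded C) : IsFiniteMeasureOnCompacts μ.pos :=
  have := isFiniteMeasureOnCompacts_tv h
  ⟨fun _ hK => (pos_apply_le_tv _).trans_lt hK.measure_lt_top⟩

theorem isFiniteMeasureOnCompacts_neg (h : μ.UnifBounded C) : IsFiniteMeasureOnCompacts μ.neg :=
  have := isFiniteMeasureOnCompacts_tv h
  ⟨fun _ hK => (neg_apply_le_tv _).trans_lt hK.measure_lt_top⟩

theorem integral_sub (h : μ.UnifBounded C) {g g' : ℝ → ℝ}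
    (hg : Continuous g) (hgs : HasCompactSupport g)
    (hg' : Continuous g') (hg's : HasCompactSupport g') :
    μ.integral (fun x => g x - g' x) = μ.integral g - μ.integral g' := by
  have := isFiniteMeasureOnCompacts_pos h
  have := isFiniteMeasureOnCompacts_neg h
  have hi := hg.integrable_of_hasCompactSupport (μ := μ.pos) hgs
  have hi' := hg'.integrable_of_hasCompactSupport (μ := μ.pos) hg's
  have hj := hg.integrable_of_hasCompactSupport (μ := μ.neg) hgs
  have hj' := hg'.integrable_of_hasCompactSupport (μ := μ.neg) hg's
  simp only [integral, MeasureTheory.integral_sub hi hi', MeasureTheory.integral_sub hj hj']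
  ring

theorem abs_integral_le {S : Set ℝ} (hS : μ.tv S ≠ ⊤) {g : ℝ → ℝ}
    (hg : ∀ x ∉ S, g x = 0) {M : ℝ} (hM : ∀ x, |g x| ≤ M) :
    |μ.integral g| ≤ M * (μ.tv S).toReal := by
  have hbound : ∀ ν : Measure ℝ, ν S ≤ μ.tv S → |∫ x, g x ∂ν| ≤ M * ν.real S := fun ν hν => by
    rw [← setIntegral_eq_integral_of_forall_compl_eq_zero hg]
    exact norm_setIntegral_le_of_norm_le_const (hν.trans_lt hS.lt_top) fun x _ =>
      (Real.norm_eq_abs _).trans_le (hM x)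
  have hpos := pos_apply_le_tv (μ := μ) S
  have hneg := neg_apply_le_tv (μ := μ) S
  calc |μ.integral g| ≤ |∫ x, g x ∂μ.pos| + |∫ x, g x ∂μ.neg| := abs_sub _ _
    _ ≤ M * μ.pos.real S + M * μ.neg.real S := add_le_add (hbound _ hpos) (hbound _ hneg)
    _ = M * (μ.tv S).toReal := by
      rw [← mul_add, tv, Measure.add_apply, measureReal_def, measureReal_def,
        ENNReal.toReal_add (hpos.trans_lt hS.lt_top).ne (hneg.trans_lt hS.lt_top).ne]

theorem tendsto_integral_of_tendstoUniformly_zero {ι : Type*} {l : Filter ι}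
    {μs : ι → LocalMeasure} {S : Set ℝ} {B : ℝ≥0} (hμs : ∀ n, (μs n).tv S ≤ B)
    {g : ι → ℝ → ℝ} (hgS : ∀ᶠ n in l, ∀ x ∉ S, g n x = 0) (hg : TendstoUniformly g 0 l) :
    Tendsto (fun n => (μs n).integral (g n)) l (𝓝 0) := by
  refine Metric.tendsto_nhds.2 fun ε hε => ?_
  have hη : 0 < ε / (B + 1) := by positivity
  filter_upwards [hgS, Metric.tendstoUniformly_iff.1 hg _ hη] with n hS hsmall
  have hB : ((μs n).tv S).toReal ≤ B := ENNReal.toReal_le_coe_of_le_coe (hμs n)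
  have hM : ∀ x, |g n x| ≤ ε / (B + 1) := fun x => by
    simpa [abs_sub_comm] using (hsmall x).le
  calc dist ((μs n).integral (g n)) 0
      ≤ ε / (B + 1) * ((μs n).tv S).toReal := by
        rw [Real.dist_0_eq_abs]
        exact abs_integral_le ((hμs n).trans_lt ENNReal.coe_lt_top).ne hS hM
    _ ≤ ε / (B + 1) * B := by gcongr
    _ < ε := by
      rw [div_mul_eq_mul_div, div_lt_iff₀ (by positivity)]
      nlinarith

theorem integral_translate (μ : LocalMeasure) (s : ℝ) {f : ℝ → ℝ} (hf : Continuous f) :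
    (μ.translate s).integral f = μ.integral (fun x => f (x - s)) := by
  simp only [translate, integral]
  rw [integral_map (measurable_sub_const s).aemeasurable hf.aestronglyMeasurable,
    integral_map (measurable_sub_const s).aemeasurable hf.aestronglyMeasurable]

theorem VagueTendsto.translate {g : ℕ → LocalMeasure} {μ : LocalMeasure}
    (h : VagueTendsto g μ) (s : ℝ) :
    VagueTendsto (fun n => (g n).translate s) (μ.translate s) := fun f hf hfs => by
  simp only [integral_translate _ s hf]
  exact h _ (hf.comp (continuous_sub_right s)) (hfs.comp_homeomorph (Homeomorph.subRight s))

/-- Translation is equicontinuous on a uniformly bounded family of local measures. -/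
theorem tendsto_integral_translate_sub_integral_translate {μs : ℕ → LocalMeasure}
    (hμs : ∀ n, (μs n).UnifBounded C) {s : ℕ → ℝ} {t : ℝ} (hs : Tendsto s atTop (𝓝 t))
    {f : ℝ → ℝ} (hf : Continuous f) (hfs : HasCompactSupport f) :
    Tendsto (fun n => ((μs n).translate (s n)).integral f - ((μs n).translate t).integral f)
      atTop (𝓝 0) := by
  set K := tsupport f + Metric.closedBall t 1
  have hK : IsCompact K := hfs.isCompact.add (isCompact_closedBall t 1)
  obtain ⟨B, hB⟩ := exists_tv_le_of_isCompact C hK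
  have hcont : ∀ r, Continuous fun x => f (x - r) := fun r => hf.comp (continuous_sub_right r)
  have hsupp : ∀ r, HasCompactSupport fun x => f (x - r) := fun r =>
    hfs.comp_homeomorph (Homeomorph.subRight r)
  have hvanish : ∀ r ∈ Metric.closedBall t 1, ∀ x ∉ K, f (x - r) = 0 := fun r hr x hx =>
    image_eq_zero_of_notMem_tsupport fun hxr => hx (by simpa using add_mem_add hxr hr)
  have hKs : ∀ᶠ n in atTop, ∀ x ∉ K, f (x - s n) - f (x - t) = 0 := by
    filter_upwards [hs.eventually_mem (Metric.closedBall_mem_nhds t one_pos)] with n hn x hx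
    rw [hvanish _ hn x hx, hvanish _ (Metric.mem_closedBall_self zero_le_one) x hx, sub_self]
  have hunif : TendstoUniformly (fun n x => f (x - s n) - f (x - t)) 0 atTop := by
    have hconst :
        TendstoUniformly (fun _ x => f (x - t)) (fun x => f (x - t)) (atTop : Filter ℕ) :=
      fun _ hu => Eventually.of_forall fun _ _ => refl_mem_uniformity hu
    have := (tendstoUniformly_comp_sub (hfs.uniformContinuous_of_continuous hf) hs).sub hconst
    rwa [sub_self] at this
  refine (tendsto_integral_of_tendstoUniformly_zero (fun n => hB _ (hμs n)) hKs hunif).congr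
    fun n => ?_
  rw [integral_translate _ _ hf, integral_translate _ _ hf,
    integral_sub (hμs n) (hcont _) (hsupp _) (hcont _) (hsupp _)]

end LocalMeasure

theorem translation_action_continuous_general (C : ℝ) (Ω : Set LocalMeasure)
    (hbd : ∀ μ ∈ Ω, LocalMeasure.UnifBounded μ C)
    (tn : ℕ → ℝ) (t : ℝ) (htn : Filter.Tendsto tn Filter.atTop (nhds t))
    (ωn : ℕ → LocalMeasure) (hωn : ∀ n, ωn n ∈ Ω) (ω : LocalMeasure)
    (hconv : LocalMeasure.VagueTendsto ωn ω) :
    LocalMeasure.VagueTendsto (fun n => (ωn n).translate (tn n)) (ω.translate t) := by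
  intro f hf hfs
  have hshift := LocalMeasure.tendsto_integral_translate_sub_integral_translate
    (fun n => hbd _ (hωn n)) htn hf hfs
  simpa only [sub_add_cancel, zero_add] using hshift.add (hconv.translate t f hf hfs)

/-- Joint continuity of the translation action on a bounded, vaguely closed,
translation invariant set of local measures: if `t_n → t` and `ω_n → ω` vaguely,
then `α_{t_n}(ω_n) → α_t(ω)` vaguely. -/
theorem translation_action_continuous (C : ℝ) (Ω : Set LocalMeasure)
    (hbd : ∀ μ ∈ Ω, LocalMeasure.UnifBounded μ C)
    (hcl : ∀ (g : ℕ → LocalMeasure), (∀ n, g n ∈ Ω) → ∀ μ : LocalMeasure,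
      LocalMeasure.VagueTendsto g μ → μ ∈ Ω)
    (hinv : ∀ ω ∈ Ω, ∀ t : ℝ, ω.translate t ∈ Ω)
    (tn : ℕ → ℝ) (t : ℝ) (htn : Filter.Tendsto tn Filter.atTop (nhds t))
    (ωn : ℕ → LocalMeasure) (hωn : ∀ n, ωn n ∈ Ω) (ω : LocalMeasure) (hω : ω ∈ Ω)
    (hconv : LocalMeasure.VagueTendsto ωn ω) :
    LocalMeasure.VagueTendsto (fun n => (ωn n).translate (tn n)) (ω.translate t) :=
  translation_action_continuous_general C Ω hbd tn t htn ωn hωn ω hconv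
end
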